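/- Let P : (0,∞) → (0,∞) be nondecreasing with ∫₂^∞ dx/P(x) = ∞, let a ≥ 2, and let Φ : [a, ∞) → ℝ be a bounded differentiable function with Φ'(x) > 0 for all x ≥ a. Then liminf_{x → +∞} Φ'(x)·P(x) = 0; in particular, there exists a sequence x_k → +∞ with Φ'(x_k)·P(x_k) → 0. -/

import Mathlib

/-!
If `Φ' P ≥ ε` on a tail `[b, ∞)`, then `Φ' ≥ ε / P` there, and integrating gives
`ε ∫_b^N dx/P(x) ≤ Φ(N) - Φ(b) ≤ 2 sup |Φ|` for every `N ≥ b`, which contradicts the divergence of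
`∫ dx/P(x)`. Hence `Φ' P < ε` at arbitrarily large `x`, while `Φ' P > 0` on `[a, ∞)`.
-/

open Filter Topology Set MeasureTheory

lemma intervalIntegrable_one_div_of_monotoneOn {P : ℝ → ℝ} {c s t : ℝ}
    (hpos : ∀ x, c ≤ x → 0 < P x) (hmono : MonotoneOn P (Ici c)) (hs : c ≤ s) (ht : c ≤ t) :
    IntervalIntegrable (fun x => 1 / P x) volume s t := by
  refine AntitoneOn.intervalIntegrable fun u hu v hv huv => ?_
  have hcu : c ≤ u := (le_min hs ht).trans hu.1
  have hcv : c ≤ v := (le_min hs ht).trans hv.1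
  exact one_div_le_one_div_of_le (hpos u hcu) (hmono hcu hcv huv)

lemma tendsto_intervalIntegral_atTop_of_nonneg {f : ℝ → ℝ} {c : ℝ}
    (hf : ∀ x, c ≤ x → 0 ≤ f x) (hint : ∀ t, c ≤ t → IntervalIntegrable f volume c t)
    (hunbdd : ∀ M, 0 < M → ∃ N, c < N ∧ M < ∫ x in c..N, f x) :
    Tendsto (fun N => ∫ x in c..N, f x) atTop atTop := by
  refine tendsto_atTop.2 fun M => ?_
  obtain ⟨N, hcN, hMN⟩ := hunbdd (max M 1) (by positivity)
  filter_upwards [eventually_ge_atTop N] with t hNt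
  have hmono : ∫ x in c..N, f x ≤ ∫ x in c..t, f x :=
    intervalIntegral.integral_mono_interval le_rfl hcN.le hNt
      (ae_restrict_of_forall_mem measurableSet_Ioc fun x hx => hf x hx.1.le)
      (hint t (hcN.le.trans hNt))
  linarith [le_max_left M 1]

lemma integral_le_sub_of_hasDerivWithinAt_Ici {Φ Φ' g : ℝ → ℝ} {a b N : ℝ} (hab : a ≤ b)
    (hbN : b ≤ N) (hderiv : ∀ x, a ≤ x → HasDerivWithinAt Φ (Φ' x) (Ici a) x)
    (hint : IntervalIntegrable g volume b N) (hle : ∀ x ∈ Ioo b N, g x ≤ Φ' x) :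
    ∫ x in b..N, g x ≤ Φ N - Φ b := by
  refine intervalIntegral.integral_le_sub_of_hasDeriv_right_of_le hbN
    (fun x hx => ((hderiv x (hab.trans hx.1)).continuousWithinAt).mono
      fun y hy => hab.trans hy.1)
    (fun x hx => (hderiv x (hab.trans hx.1.le)).mono
      fun y hy => (hab.trans hx.1.le).trans (le_of_lt hy))
    ((integrableOn_Icc_iff_integrableOn_Ioc enorm_ne_top).2 hint.1) hle

lemma frequently_deriv_lt_of_tendsto_integral {Φ Φ' g : ℝ → ℝ} {a c C : ℝ}
    (hbdd : ∀ x, a ≤ x → |Φ x| ≤ C)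
    (hderiv : ∀ x, a ≤ x → HasDerivWithinAt Φ (Φ' x) (Ici a) x)
    (hint : ∀ t, c ≤ t → IntervalIntegrable g volume c t)
    (hg : Tendsto (fun N => ∫ x in c..N, g x) atTop atTop) :
    ∃ᶠ x in atTop, Φ' x < g x := by
  by_contra h
  simp only [not_frequently, not_lt] at h
  obtain ⟨b, hb⟩ := eventually_atTop.1 (h.and (eventually_ge_atTop (max a c)))
  have hab : a ≤ b := (le_max_left a c).trans (hb b le_rfl).2
  have hcb : c ≤ b := (le_max_right a c).trans (hb b le_rfl).2
  obtain ⟨N, hN, hbN⟩ := ((hg.eventually_gt_atTop ((∫ x in c..b, g x) + 2 * C)).and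
    (eventually_ge_atTop b)).exists
  have hgbN : IntervalIntegrable g volume b N :=
    (hint b hcb).symm.trans (hint N (hcb.trans hbN))
  have hsplit := intervalIntegral.integral_add_adjacent_intervals (hint b hcb) hgbN
  have hFTC := integral_le_sub_of_hasDerivWithinAt_Ici hab hbN hderiv hgbN
    fun x hx => (hb x hx.1.le).1
  have hΦN := abs_le.1 (hbdd N (hab.trans hbN))
  have hΦb := abs_le.1 (hbdd b hab)
  linarith [hΦN.1, hΦN.2, hΦb.1, hΦb.2]

lemma liminf_eq_zero_of_frequently_lt {α : Type*} {l : Filter α} {u : α → ℝ}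
    (hnonneg : ∀ᶠ x in l, 0 ≤ u x) (hsmall : ∀ ε > 0, ∃ᶠ x in l, u x < ε) :
    liminf u l = 0 := by
  have hbdd : IsBoundedUnder (· ≥ ·) l u := ⟨0, hnonneg⟩
  refine le_antisymm (le_of_forall_pos_le_add fun ε hε => ?_) ?_
  · rw [zero_add]
    exact liminf_le_of_frequently_le ((hsmall ε hε).mono fun x hx => hx.le) hbdd
  · exact le_liminf_of_le
      (IsCoboundedUnder.of_frequently_le ((hsmall 1 one_pos).mono fun x hx => hx.le)) hnonneg

lemma exists_seq_tendsto_zero_of_frequently_lt {u : ℝ → ℝ} (hnonneg : ∀ᶠ x in atTop, 0 ≤ u x)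
    (hsmall : ∀ ε > 0, ∃ᶠ x in atTop, u x < ε) :
    ∃ xs : ℕ → ℝ, Tendsto xs atTop atTop ∧ Tendsto (fun k => u (xs k)) atTop (𝓝 0) := by
  have hpick (k : ℕ) : ∃ x, (k : ℝ) ≤ x ∧ 0 ≤ u x ∧ u x < 1 / (k + 1) :=
    ((hsmall _ (by positivity)).and_eventually
      ((eventually_ge_atTop (k : ℝ)).and hnonneg)).exists.imp fun _ hx => ⟨hx.2.1, hx.2.2, hx.1⟩
  choose xs hk hnonneg' hlt using hpick
  exact ⟨xs, tendsto_atTop_mono hk tendsto_natCast_atTop_atTop,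
    tendsto_of_tendsto_of_tendsto_of_le_of_le tendsto_const_nhds
      tendsto_one_div_add_atTop_nhds_zero_nat hnonneg' fun k => (hlt k).le⟩

/-- If `P : (0,∞) → (0,∞)` is nondecreasing with `∫₂^∞ dx/P(x) = ∞`,
`a ≥ 2`, and `Φ : [a,∞) → ℝ` is bounded and differentiable with `Φ' > 0`, then
`liminf_{x→+∞} Φ'(x)·P(x) = 0`; in particular some sequence `x_k → +∞` has
`Φ'(x_k)·P(x_k) → 0`. -/
theorem stmt_7 (P : ℝ → ℝ)
    (hPpos : ∀ x : ℝ, 0 < x → 0 < P x)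
    (hPmono : ∀ x y : ℝ, 0 < x → x ≤ y → P x ≤ P y)
    (hPint : ∀ M : ℝ, 0 < M → ∃ N : ℝ, 2 < N ∧ M < ∫ x in (2:ℝ)..N, 1 / P x)
    (a : ℝ) (ha : 2 ≤ a) (Φ Φ' : ℝ → ℝ)
    (hbdd : ∃ C : ℝ, ∀ x : ℝ, a ≤ x → |Φ x| ≤ C)
    (hderiv : ∀ x : ℝ, a ≤ x → HasDerivWithinAt Φ (Φ' x) (Set.Ici a) x)
    (hpos : ∀ x : ℝ, a ≤ x → 0 < Φ' x) :
    Filter.liminf (fun x : ℝ => Φ' x * P x) Filter.atTop = 0 ∧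
      ∃ xseq : ℕ → ℝ, Filter.Tendsto xseq Filter.atTop Filter.atTop ∧
        Filter.Tendsto (fun k => Φ' (xseq k) * P (xseq k)) Filter.atTop (𝓝 0) := by
  obtain ⟨C, hC⟩ := hbdd
  have hPpos₂ (x : ℝ) (hx : 2 ≤ x) : 0 < P x := hPpos x (by linarith)
  have hint (t : ℝ) (ht : 2 ≤ t) : IntervalIntegrable (fun x => 1 / P x) volume 2 t :=
    intervalIntegrable_one_div_of_monotoneOn hPpos₂
      (fun x hx y _ hxy => hPmono x y (by linarith [mem_Ici.1 hx]) hxy) le_rfl ht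
  have hdiv : Tendsto (fun N => ∫ x in (2:ℝ)..N, 1 / P x) atTop atTop :=
    tendsto_intervalIntegral_atTop_of_nonneg (fun x hx => (one_div_pos.2 (hPpos₂ x hx)).le)
      hint hPint
  have hsmall (ε : ℝ) (hε : 0 < ε) : ∃ᶠ x in atTop, Φ' x * P x < ε := by
    have hεdiv : Tendsto (fun N => ∫ x in (2:ℝ)..N, ε * (1 / P x)) atTop atTop := by
      simpa only [intervalIntegral.integral_const_mul] using hdiv.const_mul_atTop hε
    refine (frequently_deriv_lt_of_tendsto_integral hC hderiv
      (fun t ht => (hint t ht).const_mul ε) hεdiv).mp ?_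
    filter_upwards [eventually_ge_atTop 2] with x hx hlt
    rwa [mul_one_div, lt_div_iff₀ (hPpos₂ x hx)] at hlt
  have hnonneg : ∀ᶠ x in atTop, 0 ≤ Φ' x * P x := by
    filter_upwards [eventually_ge_atTop a] with x hx
    exact mul_nonneg (hpos x hx).le (hPpos₂ x (ha.trans hx)).le
  exact ⟨liminf_eq_zero_of_frequently_lt hnonneg hsmall,
    exists_seq_tendsto_zero_of_frequently_lt hnonneg hsmall⟩
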